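/- For any absolutely continuous function ψ : (0,∞) → ℝ with ψ(0⁺) = 0 and finite energy E(ψ) := (1/2)∫₀^∞ [ψ'(r)² + 2 sin²ψ(r)/r² + (ψ(r) − sin ψ(r) cos ψ(r))²/r⁴] r² dr ≤ M, one has the pointwise bound (1/2)(ψ(r)² − sin²ψ(r)) ≤ 2M for all r > 0. -/

import Mathlib

open Real Set MeasureTheory

/-!
Along the profile, `d/dr G(ψ(r)) = (ψ - sin ψ cos ψ) ψ'`, and by AM-GM
`(ψ - sin ψ cos ψ) ψ' ≤ ½ ((ψ - sin ψ cos ψ)² / r² + ψ'² r²)`, which is at most the energy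
density. Integrating from `0`, where `G(ψ(0)) = 0`, bounds `G(ψ(r))` by twice the energy.
-/

namespace AdkinsNappi

noncomputable def G (ρ : ℝ) : ℝ := (1 / 2) * (ρ ^ 2 - sin ρ ^ 2)

noncomputable def energyDensity (ψ ψ' : ℝ → ℝ) (r : ℝ) : ℝ :=
  ((ψ' r) ^ 2 + 2 * sin (ψ r) ^ 2 / r ^ 2 + (ψ r - sin (ψ r) * cos (ψ r)) ^ 2 / r ^ 4) * r ^ 2

theorem hasDerivAt_G (ρ : ℝ) : HasDerivAt G (ρ - sin ρ * cos ρ) ρ := by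
  have h := ((hasDerivAt_pow 2 ρ).sub ((hasDerivAt_sin ρ).fun_pow 2)).const_mul (1 / 2 : ℝ)
  exact h.congr_deriv (by push_cast; ring)

theorem continuous_G : Continuous G :=
  continuous_iff_continuousAt.2 fun ρ => (hasDerivAt_G ρ).continuousAt

theorem energyDensity_nonneg (ψ ψ' : ℝ → ℝ) (r : ℝ) : 0 ≤ energyDensity ψ ψ' r := by
  unfold energyDensity
  positivity

theorem mul_le_half_div_sq_add_sq_mul_sq (a b : ℝ) {r : ℝ} (hr : r ≠ 0) :
    a * b ≤ (1 / 2) * (a ^ 2 / r ^ 2 + b ^ 2 * r ^ 2) := by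
  have h := two_mul_le_add_sq (a / r) (b * r)
  have hab : a / r * (b * r) = a * b := by field_simp
  rw [mul_assoc, hab, div_pow, mul_pow] at h
  linarith

theorem mul_deriv_le_energyDensity (ψ ψ' : ℝ → ℝ) {r : ℝ} (hr : 0 < r) :
    (ψ r - sin (ψ r) * cos (ψ r)) * ψ' r ≤ energyDensity ψ ψ' r := by
  have hsplit : energyDensity ψ ψ' r = ψ' r ^ 2 * r ^ 2 + 2 * sin (ψ r) ^ 2
      + (ψ r - sin (ψ r) * cos (ψ r)) ^ 2 / r ^ 2 := by
    unfold energyDensity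
    field_simp
  have hamgm := mul_le_half_div_sq_add_sq_mul_sq (ψ r - sin (ψ r) * cos (ψ r)) (ψ' r) hr.ne'
  have : 0 ≤ (ψ r - sin (ψ r) * cos (ψ r)) ^ 2 / r ^ 2 := by positivity
  have : 0 ≤ ψ' r ^ 2 * r ^ 2 := by positivity
  have : 0 ≤ sin (ψ r) ^ 2 := sq_nonneg _
  linarith

theorem G_comp_sub_le_integral_energyDensity (ψ ψ' : ℝ → ℝ)
    (hcont : ContinuousOn ψ (Ici 0)) (hderiv : ∀ r ∈ Ioi (0 : ℝ), HasDerivAt ψ (ψ' r) r)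
    (hint : IntegrableOn (energyDensity ψ ψ') (Ioi 0)) {r : ℝ} (hr : 0 < r) :
    G (ψ r) - G (ψ 0) ≤ ∫ s in Ioi 0, energyDensity ψ ψ' s := by
  -- The one-sided FTC inequality needs no integrability (or measurability) of `ψ'`.
  have hFTC : G (ψ r) - G (ψ 0) ≤ ∫ s in (0)..r, energyDensity ψ ψ' s := by
    refine intervalIntegral.sub_le_integral_of_hasDeriv_right_of_le (g := G ∘ ψ) hr.le
      (continuous_G.comp_continuousOn (hcont.mono Icc_subset_Ici_self))
      (fun s hs => ((hasDerivAt_G (ψ s)).comp s (hderiv s hs.1)).hasDerivWithinAt) ?_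
      (fun s hs => mul_deriv_le_energyDensity ψ ψ' hs.1)
    rw [integrableOn_Icc_iff_integrableOn_Ioc]
    exact hint.mono_set Ioc_subset_Ioi_self
  calc G (ψ r) - G (ψ 0) ≤ ∫ s in (0)..r, energyDensity ψ ψ' s := hFTC
    _ = ∫ s in Ioc 0 r, energyDensity ψ ψ' s := intervalIntegral.integral_of_le hr.le
    _ ≤ ∫ s in Ioi 0, energyDensity ψ ψ' s :=
      setIntegral_mono_set hint (.of_forall (energyDensity_nonneg ψ ψ'))
        Ioc_subset_Ioi_self.eventuallyLE

end AdkinsNappi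

open AdkinsNappi in
theorem stmt2 (ψ ψ' : ℝ → ℝ) (M : ℝ)
    (hcont : ContinuousOn ψ (Set.Ici (0:ℝ))) (h0 : ψ 0 = 0)
    (hderiv : ∀ r ∈ Set.Ioi (0:ℝ), HasDerivAt ψ (ψ' r) r)
    (hint : IntegrableOn (fun r : ℝ =>
      ((ψ' r)^2 + 2 * Real.sin (ψ r)^2 / r^2 +
        (ψ r - Real.sin (ψ r) * Real.cos (ψ r))^2 / r^4) * r^2) (Set.Ioi 0))
    (hE : (1/2) * ∫ r in Set.Ioi (0:ℝ),
      ((ψ' r)^2 + 2 * Real.sin (ψ r)^2 / r^2 +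
        (ψ r - Real.sin (ψ r) * Real.cos (ψ r))^2 / r^4) * r^2 ≤ M) :
    ∀ r > 0, (1/2) * ((ψ r)^2 - Real.sin (ψ r)^2) ≤ 2 * M := by
  intro r hr
  have hbound := G_comp_sub_le_integral_energyDensity ψ ψ' hcont hderiv hint hr
  have hG0 : G (ψ 0) = 0 := by simp [G, h0]
  rw [hG0, sub_zero] at hbound
  exact hbound.trans (by unfold energyDensity; linarith)
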